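/- Let (μ_n)_{n≥1} be a sequence of finite signed measures on ℝ converging weakly to a finite signed measure μ, in the sense that ∫ g dμ_n → ∫ g dμ for every bounded continuous function g : ℝ → ℝ. Then Σ(μ) ≤ liminf_{n→∞} Σ(μ_n). -/

import Mathlib

/-!
If `altMeasure μ⁺ μ⁻ (n+1)` charges the ordered tuples, it charges a box `I₀ × ⋯ × Iₙ` of open
intervals consisting of ordered tuples, so `μ⁺, μ⁻, μ⁺, …` charge `I₀, I₁, I₂, …`. Since `μ⁺ ⟂ μ⁻`,
there are continuous bumps `gₖ` supported in `Iₖ` with `(-1)ᵏ ∫ gₖ dμ > 0`. Weak convergence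
preserves these finitely many strict signs for large `m`, and the signs force `μₘ⁺, μₘ⁻, …` to
charge the same intervals, whence `Σ(μₘ) ≥ n`. The other alternating product is the first one
for `-μ`.
-/

open MeasureTheory ENNReal

noncomputable def altMeasure (p q : MeasureTheory.Measure ℝ) (n : ℕ) :
    MeasureTheory.Measure (Fin n → ℝ) :=
  MeasureTheory.Measure.pi (fun i => if Even (i : ℕ) then p else q)

def orderedSet (n : ℕ) : Set (Fin n → ℝ) := {x | StrictMono x}

noncomputable def sigmaPair (p q : MeasureTheory.Measure ℝ) : ℕ∞ :=
  ⨆ (n : ℕ) (_ : 0 < altMeasure p q (n+1) (orderedSet (n+1)) ∨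
      0 < altMeasure q p (n+1) (orderedSet (n+1))), (n : ℕ∞)

/-- Number of zero-crossings of a finite signed measure. -/
noncomputable def sigmaCross (μ : MeasureTheory.SignedMeasure ℝ) : ℕ∞ :=
  sigmaPair μ.toJordanDecomposition.posPart μ.toJordanDecomposition.negPart

/-- Integral of a function against a finite signed measure: `∫ g dμ⁺ - ∫ g dμ⁻`. -/
noncomputable def sInt (μ : MeasureTheory.SignedMeasure ℝ) (g : ℝ → ℝ) : ℝ :=
  (∫ x, g x ∂μ.toJordanDecomposition.posPart) - (∫ x, g x ∂μ.toJordanDecomposition.negPart)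

open Filter Set Function Topology

lemma isOpen_orderedSet (n : ℕ) : IsOpen (orderedSet n) := by
  have : orderedSet n = ⋂ (i : Fin n) (j : Fin n) (_ : i < j), {x | x i < x j} := by
    ext x
    simp [orderedSet, StrictMono]
  rw [this]
  exact isOpen_iInter_of_finite fun i => isOpen_iInter_of_finite fun j =>
    isOpen_iInter_of_finite fun _ => isOpen_lt (continuous_apply i) (continuous_apply j)

lemma exists_rat_pi_Ioo_subset {ι : Type*} [Finite ι] {U : Set (ι → ℝ)} (hU : IsOpen U)
    {x : ι → ℝ} (hx : x ∈ U) :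
    ∃ a b : ι → ℚ, x ∈ univ.pi (fun i => Ioo (a i : ℝ) (b i)) ∧
      univ.pi (fun i => Ioo (a i : ℝ) (b i)) ⊆ U := by
  obtain ⟨u, hu, huU⟩ := isOpen_pi_iff'.1 hU x hx
  have hrat : ∀ i, ∃ a b : ℚ, x i ∈ Ioo (a : ℝ) b ∧ Ioo (a : ℝ) b ⊆ u i := by
    intro i
    obtain ⟨l, r, ⟨hl, hr⟩, hlr⟩ :=
      mem_nhds_iff_exists_Ioo_subset.1 ((hu i).1.mem_nhds (hu i).2)
    obtain ⟨a, hla, hax⟩ := exists_rat_btwn hl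
    obtain ⟨b, hxb, hbr⟩ := exists_rat_btwn hr
    exact ⟨a, b, ⟨hax, hxb⟩, (Ioo_subset_Ioo hla.le hbr.le).trans hlr⟩
  choose a b hxab habu using hrat
  exact ⟨a, b, fun i _ => hxab i, (pi_mono fun i _ => habu i).trans huU⟩

lemma exists_pi_subset_measure_pos {ι : Type*} [Fintype ι] (ν : ι → Measure ℝ)
    [∀ i, SigmaFinite (ν i)] {U : Set (ι → ℝ)} (hU : IsOpen U) (h : 0 < Measure.pi ν U) :
    ∃ I : ι → Set ℝ, (∀ i, IsOpen (I i)) ∧ univ.pi I ⊆ U ∧ ∀ i, 0 < ν i (I i) := by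
  by_contra! hnull
  -- otherwise `U` is covered by countably many null rational boxes
  have hcover : U ⊆ ⋃ (a : ι → ℚ) (b : ι → ℚ)
      (_ : univ.pi (fun i => Ioo (a i : ℝ) (b i)) ⊆ U), univ.pi (fun i => Ioo (a i : ℝ) (b i)) :=
    fun x hx => by
      obtain ⟨a, b, hx, hab⟩ := exists_rat_pi_Ioo_subset hU hx
      exact mem_iUnion₂.2 ⟨a, b, mem_iUnion.2 ⟨hab, hx⟩⟩
  refine h.ne' (measure_mono_null hcover ?_)
  refine measure_iUnion_null fun a => measure_iUnion_null fun b => measure_iUnion_null fun hab => ?_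
  obtain ⟨i, hi⟩ := hnull _ (fun i => isOpen_Ioo) hab
  rw [Measure.pi_pi]
  exact Finset.prod_eq_zero (Finset.mem_univ i) (nonpos_iff_eq_zero.1 hi)

section MutuallySingular

variable {α : Type*} [MetricSpace α] [MeasurableSpace α] [BorelSpace α]
  {p q : Measure α} [IsFiniteMeasure p] [IsFiniteMeasure q]

lemma exists_isClosed_subset_isOpen_measure_lt (hpq : p ⟂ₘ q) {I : Set α} (hI : IsOpen I)
    (hp : 0 < p I) : ∃ K V, IsClosed K ∧ IsOpen V ∧ K ⊆ V ∧ V ⊆ I ∧ q V < p K := by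
  obtain ⟨s, hs, hps, hqs⟩ := hpq
  obtain ⟨K, hKI, hK, hpK⟩ := (hI.measurableSet.diff hs).exists_lt_isClosed_of_ne_top
    (measure_ne_top _ _) (show 0 < p (I \ s) by rwa [measure_sdiff_null hps])
  have hqK : q K = 0 := measure_mono_null (fun x hx => (hKI hx).2) hqs
  obtain ⟨V, hKV, hV, hqV⟩ := K.exists_isOpen_lt_of_lt (p K) (hqK ▸ hpK)
  exact ⟨K, V ∩ I, hK, hV.inter hI, subset_inter hKV (hKI.trans sdiff_subset), inter_subset_right,
    (measure_mono inter_subset_left).trans_lt hqV⟩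

lemma measureReal_le_integral_of_eqOn_one (ν : Measure α) [IsFiniteMeasure ν] {f : α → ℝ}
    (hf : Continuous f) (hf01 : ∀ x, f x ∈ Icc 0 1) {K : Set α} (hK : MeasurableSet K)
    (hfK : EqOn f 1 K) : ν.real K ≤ ∫ x, f x ∂ν := by
  rw [← integral_indicator_one hK]
  refine integral_mono ((integrable_const 1).indicator hK) (Integrable.of_bound
    hf.aestronglyMeasurable 1 (ae_of_all _ fun x => (Real.norm_of_nonneg (hf01 x).1).trans_le
      (hf01 x).2)) fun x => ?_
  by_cases hx : x ∈ K
  · simp [indicator_of_mem hx, hfK hx]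
  · simp [indicator_of_notMem hx, (hf01 x).1]

lemma integral_le_measureReal_of_eqOn_zero (ν : Measure α) [IsFiniteMeasure ν] {f : α → ℝ}
    (hf : Continuous f) (hf01 : ∀ x, f x ∈ Icc 0 1) {V : Set α} (hV : MeasurableSet V)
    (hfV : EqOn f 0 Vᶜ) : ∫ x, f x ∂ν ≤ ν.real V := by
  rw [← integral_indicator_one hV]
  refine integral_mono (Integrable.of_bound hf.aestronglyMeasurable 1 (ae_of_all _ fun x =>
    (Real.norm_of_nonneg (hf01 x).1).trans_le (hf01 x).2)) ((integrable_const 1).indicator hV)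
    fun x => ?_
  by_cases hx : x ∈ V
  · simp [indicator_of_mem hx, (hf01 x).2]
  · simp [indicator_of_notMem hx, hfV hx]

lemma exists_continuous_integral_lt_of_mutuallySingular (hpq : p ⟂ₘ q) {I : Set α}
    (hI : IsOpen I) (hp : 0 < p I) :
    ∃ g : α → ℝ, Continuous g ∧ (∀ x, g x ∈ Icc 0 1) ∧ support g ⊆ I ∧
      ∫ x, g x ∂q < ∫ x, g x ∂p := by
  obtain ⟨K, V, hK, hV, hKV, hVI, hqp⟩ := exists_isClosed_subset_isOpen_measure_lt hpq hI hp
  obtain ⟨f, hfV, hfK, hf01⟩ := exists_continuous_zero_one_of_isClosed hV.isClosed_compl hK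
    (disjoint_compl_left_iff_subset.2 hKV)
  refine ⟨f, f.continuous, hf01, fun x hx => hVI (not_not.1 fun h => hx (hfV h)), ?_⟩
  calc ∫ x, f x ∂q ≤ q.real V :=
        integral_le_measureReal_of_eqOn_zero q f.continuous hf01 hV.measurableSet hfV
    _ < p.real K := (toReal_lt_toReal (measure_ne_top _ _) (measure_ne_top _ _)).2 hqp
    _ ≤ ∫ x, f x ∂p := measureReal_le_integral_of_eqOn_one p f.continuous hf01 hK.measurableSet hfK

end MutuallySingular

lemma measure_pos_of_integral_ne_zero {α : Type*} [MeasurableSpace α] {ν : Measure α}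
    {g : α → ℝ} {I : Set α} (hgI : support g ⊆ I) (h : ∫ x, g x ∂ν ≠ 0) : 0 < ν I :=
  (frequently_ae_iff.1 (frequently_ae_ne_zero_of_integral_ne_zero h)).bot_lt.trans_le
    (measure_mono hgI)

lemma measure_pi_pos_of_integral_ne_zero {ι : Type*} [Fintype ι] {α : ι → Type*}
    [∀ i, MeasurableSpace (α i)] {ν : ∀ i, Measure (α i)} [∀ i, SigmaFinite (ν i)]
    {I : ∀ i, Set (α i)} {g : ∀ i, α i → ℝ} (hgI : ∀ i, support (g i) ⊆ I i)
    (h : ∀ i, ∫ x, g i x ∂ν i ≠ 0) : 0 < Measure.pi ν (univ.pi I) := by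
  rw [Measure.pi_pi]
  exact CanonicallyOrderedAdd.prod_pos.2 fun i _ => measure_pos_of_integral_ne_zero (hgI i) (h i)

namespace MeasureTheory.SignedMeasure

variable (μ : SignedMeasure ℝ)

noncomputable def altPart (k : ℕ) : Measure ℝ :=
  if Even k then μ.toJordanDecomposition.posPart else μ.toJordanDecomposition.negPart

instance (k : ℕ) : IsFiniteMeasure (μ.altPart k) := by
  unfold altPart; split <;> infer_instance

lemma posPart_neg : (-μ).toJordanDecomposition.posPart = μ.toJordanDecomposition.negPart := by
  rw [toJordanDecomposition_neg, JordanDecomposition.neg_posPart]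

lemma negPart_neg : (-μ).toJordanDecomposition.negPart = μ.toJordanDecomposition.posPart := by
  rw [toJordanDecomposition_neg, JordanDecomposition.neg_negPart]

lemma altMeasure_eq_pi_altPart (n : ℕ) :
    altMeasure μ.toJordanDecomposition.posPart μ.toJordanDecomposition.negPart n =
      Measure.pi fun i : Fin n => μ.altPart i := rfl

lemma altMeasure_swap_eq_pi_altPart_neg (n : ℕ) :
    altMeasure μ.toJordanDecomposition.negPart μ.toJordanDecomposition.posPart n =
      Measure.pi fun i : Fin n => (-μ).altPart i := by
  simp only [altMeasure, altPart, posPart_neg, negPart_neg]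

lemma altPart_mutuallySingular_altPart_neg (k : ℕ) : μ.altPart k ⟂ₘ (-μ).altPart k := by
  simp only [altPart, posPart_neg, negPart_neg]
  split
  exacts [μ.toJordanDecomposition.mutuallySingular, μ.toJordanDecomposition.mutuallySingular.symm]

lemma integral_altPart_sub_integral_altPart_neg (g : ℝ → ℝ) (k : ℕ) :
    ∫ x, g x ∂μ.altPart k - ∫ x, g x ∂(-μ).altPart k = (-1) ^ k * sInt μ g := by
  rcases Nat.even_or_odd k with hk | hk
  · simp [altPart, hk, hk.neg_one_pow, posPart_neg, sInt]
  · simp [altPart, Nat.not_even_iff_odd.2 hk, hk.neg_one_pow, negPart_neg, sInt]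

lemma sInt_neg (g : ℝ → ℝ) : sInt (-μ) g = -sInt μ g := by
  rw [sInt, sInt, posPart_neg, negPart_neg, neg_sub]

lemma natCast_le_sigmaCross {n : ℕ}
    (h : 0 < altMeasure μ.toJordanDecomposition.posPart μ.toJordanDecomposition.negPart
      (n + 1) (orderedSet (n + 1))) : (n : ℕ∞) ≤ sigmaCross μ := by
  unfold sigmaCross sigmaPair
  exact le_iSup₂_of_le n (Or.inl h) le_rfl

lemma sigmaCross_neg : sigmaCross (-μ) = sigmaCross μ := by
  simp only [sigmaCross, sigmaPair, posPart_neg, negPart_neg, or_comm]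

end MeasureTheory.SignedMeasure

open SignedMeasure

lemma eventually_le_sigmaCross {μs : ℕ → SignedMeasure ℝ} {μ : SignedMeasure ℝ}
    (hweak : ∀ g : ℝ → ℝ, Continuous g → (∃ C : ℝ, ∀ x, |g x| ≤ C) →
      Tendsto (fun n => sInt (μs n) g) atTop (𝓝 (sInt μ g))) {n : ℕ}
    (h : 0 < altMeasure μ.toJordanDecomposition.posPart μ.toJordanDecomposition.negPart
      (n + 1) (orderedSet (n + 1))) :
    ∀ᶠ m in atTop, (n : ℕ∞) ≤ sigmaCross (μs m) := by
  rw [altMeasure_eq_pi_altPart] at h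
  obtain ⟨I, hI, hIU, hIpos⟩ := exists_pi_subset_measure_pos _ (isOpen_orderedSet _) h
  choose g hgc hg01 hgI hglt using fun i : Fin (n + 1) =>
    exists_continuous_integral_lt_of_mutuallySingular
      (μ.altPart_mutuallySingular_altPart_neg i) (hI i) (hIpos i)
  have hsign : ∀ i : Fin (n + 1), 0 < (-1) ^ (i : ℕ) * sInt μ (g i) := fun i => by
    rw [← integral_altPart_sub_integral_altPart_neg, sub_pos]
    exact hglt i
  have hbdd : ∀ i x, |g i x| ≤ 1 := fun i x => abs_le.2 ⟨by linarith [(hg01 i x).1], (hg01 i x).2⟩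
  have hev : ∀ᶠ m in atTop, ∀ i : Fin (n + 1), 0 < (-1) ^ (i : ℕ) * sInt (μs m) (g i) :=
    eventually_all.2 fun i => (((hweak _ (hgc i) ⟨1, hbdd i⟩).const_mul _).eventually
      (eventually_gt_nhds (hsign i)))
  filter_upwards [hev] with m hm
  refine (μs m).natCast_le_sigmaCross ?_
  rw [altMeasure_eq_pi_altPart]
  refine (measure_pi_pos_of_integral_ne_zero hgI fun i => ?_).trans_le (measure_mono hIU)
  have hlt := hm i
  rw [← integral_altPart_sub_integral_altPart_neg, sub_pos] at hlt
  exact ((integral_nonneg fun x => (hg01 i x).1).trans_lt hlt).ne'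

/-- Zero-crossings are lower semicontinuous along weak convergence: if `∫ g dμₙ → ∫ g dμ`
for every bounded continuous `g`, then `Σ(μ) ≤ liminf Σ(μₙ)`. -/
theorem stmt10 (μs : ℕ → MeasureTheory.SignedMeasure ℝ) (μ : MeasureTheory.SignedMeasure ℝ)
    (hweak : ∀ g : ℝ → ℝ, Continuous g → (∃ C : ℝ, ∀ x, |g x| ≤ C) →
      Filter.Tendsto (fun n => sInt (μs n) g) Filter.atTop (nhds (sInt μ g))) :
    sigmaCross μ ≤ Filter.liminf (fun n => sigmaCross (μs n)) Filter.atTop := by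
  refine iSup₂_le fun n hn => le_liminf_of_le (by isBoundedDefault) ?_
  rcases hn with h | h
  · exact eventually_le_sigmaCross hweak h
  · have hweak_neg : ∀ g : ℝ → ℝ, Continuous g → (∃ C : ℝ, ∀ x, |g x| ≤ C) →
        Tendsto (fun m => sInt (-μs m) g) atTop (𝓝 (sInt (-μ) g)) := fun g hg hC => by
      simpa only [sInt_neg] using (hweak g hg hC).neg
    rw [altMeasure_swap_eq_pi_altPart_neg, ← altMeasure_eq_pi_altPart] at h
    simpa only [sigmaCross_neg] using eventually_le_sigmaCross hweak_neg h
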